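/- arXiv:1810.08636 — 2 statements merged into one kernel-verified Lean document; each statement's English description precedes it below -/
import Mathlib

section
/- Every union ultrafilter is an idempotent element of the semigroup of min-unbounded ultrafilters on FIN: if u is a union ultrafilter, then u + u = u. -/
open Set

def FIN : Set (Finset ℕ) := {s | s.Nonempty}

/-- FU(X): all unions of nonempty finite subfamilies of X. -/
def FU (X : Set (Finset ℕ)) : Set (Finset ℕ) :=
  {s | ∃ F : Finset (Finset ℕ), F.Nonempty ∧ ↑F ⊆ X ∧ s = F.sup id}

/-- min of a (nonempty) finite set of naturals. -/
noncomputable def mn (s : Finset ℕ) : ℕ := sInf ↑s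
/-- max of a finite set of naturals. -/
def mx (s : Finset ℕ) : ℕ := s.sup id

def MinUnbSet (A : Set (Finset ℕ)) : Prop := ∀ n : ℕ, ∃ x ∈ A, n < mn x

/-- −x + A = { y ∈ FIN | max x < min y ∧ x ∪ y ∈ A }. -/
def negAdd (x : Finset ℕ) (A : Set (Finset ℕ)) : Set (Finset ℕ) :=
  {y | y ∈ FIN ∧ mx x < mn y ∧ x ∪ y ∈ A}

/-- A ∈ u + v iff { x | −x + A ∈ v } ∈ u. -/
def sumMem (u v : Ultrafilter (Finset ℕ)) (A : Set (Finset ℕ)) : Prop :=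
  {x | negAdd x A ∈ v} ∈ u

/-- a min-unbounded ultrafilter on FIN. -/
def MinUnbUlt (u : Ultrafilter (Finset ℕ)) : Prop :=
  FIN ∈ u ∧ ∀ A ∈ u, MinUnbSet A

/-- an infinite pairwise disjoint family of nonempty finite sets. -/
def PDisjFam (X : Set (Finset ℕ)) : Prop :=
  X ⊆ FIN ∧ X.Infinite ∧ X.PairwiseDisjoint id

/-- a block family: any two distinct members are separated. -/
def IsBlockFam (X : Set (Finset ℕ)) : Prop :=
  X ⊆ FIN ∧ ∀ x ∈ X, ∀ y ∈ X, x ≠ y → mx x < mn y ∨ mx y < mn x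

/-- a block sequence indexed by ℕ. -/
def IsBlockSeq (x : ℕ → Finset ℕ) : Prop :=
  (∀ n, (x n).Nonempty) ∧ ∀ n, mx (x n) < mn (x (n + 1))

/-- A* = { x ∈ A | −x + A ∈ u }. -/
def ustar (u : Ultrafilter (Finset ℕ)) (A : Set (Finset ℕ)) : Set (Finset ℕ) :=
  {x | x ∈ A ∧ negAdd x A ∈ u}

/-- a union ultrafilter on FIN. -/
def UnionUlt (u : Ultrafilter (Finset ℕ)) : Prop :=
  FIN ∈ u ∧ ∀ A ∈ u, ∃ X, PDisjFam X ∧ FU X ∈ u ∧ FU X ⊆ A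

/-- almost condensation: X ≤ Y iff X \ F ⊆ FU Y for some finite F. -/
def ACond (X Y : Set (Finset ℕ)) : Prop :=
  ∃ F : Set (Finset ℕ), F.Finite ∧ X \ F ⊆ FU Y


lemma mem_FU_of_mem {X : Set (Finset ℕ)} {x : Finset ℕ} (hx : x ∈ X) : x ∈ FU X :=
  ⟨{x}, Finset.singleton_nonempty x, by simpa using hx, by simp⟩

lemma FU_union {X : Set (Finset ℕ)} {x y : Finset ℕ} (hx : x ∈ FU X) (hy : y ∈ FU X) :
    x ∪ y ∈ FU X := by
  obtain ⟨F, hF, hFX, rfl⟩ := hx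
  obtain ⟨G, hG, hGX, rfl⟩ := hy
  refine ⟨F ∪ G, hF.mono Finset.subset_union_left, ?_, ?_⟩
  · push_cast
    exact union_subset hFX hGX
  · exact (Finset.sup_union).symm

lemma FU_nonempty {X : Set (Finset ℕ)} (hX : X ⊆ FIN) {x : Finset ℕ} (hx : x ∈ FU X) :
    x.Nonempty := by
  obtain ⟨F, hF, hFX, rfl⟩ := hx
  obtain ⟨t, ht⟩ := hF
  have htne : t.Nonempty := hX (hFX ht)
  exact htne.mono (Finset.le_sup (f := id) ht)

lemma min_unb (u : Ultrafilter (Finset ℕ)) (hu : UnionUlt u) (n : ℕ) :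
    {y : Finset ℕ | n < mn y} ∈ u := by
  by_contra h
  have h' : {y : Finset ℕ | mn y ≤ n} ∈ u := by
    have := Ultrafilter.compl_mem_iff_notMem.mpr h
    convert this using 1
    ext y; simp [not_lt]
  have hmap : {m : ℕ | m ≤ n} ∈ Ultrafilter.map mn u := by
    rwa [Ultrafilter.mem_map]
  obtain ⟨m, -, hm⟩ := Ultrafilter.eq_pure_of_finite_mem (Set.finite_Iic n) hmap
  have hmem : mn ⁻¹' {m} ∈ u := by
    rw [← Ultrafilter.mem_map, hm]; simp
  have hA : FIN ∩ mn ⁻¹' {m} ∈ u := (u : Filter (Finset ℕ)).inter_mem hu.1 hmem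
  obtain ⟨X, hX, hFUmem, hFUsub⟩ := hu.2 _ hA
  obtain ⟨x1, hx1, x2, hx2, hne⟩ := hX.2.1.nontrivial
  have h1 := hFUsub (mem_FU_of_mem hx1)
  have h2 := hFUsub (mem_FU_of_mem hx2)
  have hm1 : m ∈ x1 := by
    have := Nat.sInf_mem (s := (↑x1 : Set ℕ)) (by exact_mod_cast h1.1)
    rw [show sInf (↑x1 : Set ℕ) = m from h1.2] at this
    exact_mod_cast this
  have hm2 : m ∈ x2 := by
    have := Nat.sInf_mem (s := (↑x2 : Set ℕ)) (by exact_mod_cast h2.1)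
    rw [show sInf (↑x2 : Set ℕ) = m from h2.2] at this
    exact_mod_cast this
  exact (Finset.disjoint_left.mp (hX.2.2 hx1 hx2 hne) hm1) hm2

lemma forward (u : Ultrafilter (Finset ℕ)) (hu : UnionUlt u) (A : Set (Finset ℕ))
    (hA : A ∈ u) : sumMem u u A := by
  obtain ⟨X, hX, hFUmem, hFUsub⟩ := hu.2 A hA
  have hkey : FU X ⊆ {x | negAdd x A ∈ u} := by
    intro x hx
    have hsub : FU X ∩ {y : Finset ℕ | mx x < mn y} ⊆ negAdd x A := by
      rintro y ⟨hy, hy2⟩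
      exact ⟨FU_nonempty hX.1 hy, hy2, hFUsub (FU_union hx hy)⟩
    exact Filter.mem_of_superset
      ((u : Filter (Finset ℕ)).inter_mem hFUmem (min_unb u hu (mx x))) hsub
  exact Filter.mem_of_superset hFUmem hkey

theorem stmt11 (u : Ultrafilter (Finset ℕ)) (hu : UnionUlt u) :
    ∀ A : Set (Finset ℕ), A ∈ u ↔ sumMem u u A := by
  intro A
  refine ⟨forward u hu A, fun hS => ?_⟩
  by_contra hA
  have hAc : Aᶜ ∈ u := Ultrafilter.compl_mem_iff_notMem.mpr hA
  have hSc := forward u hu Aᶜ hAc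
  obtain ⟨x, hx1, hx2⟩ := Filter.nonempty_of_mem
    ((u : Filter (Finset ℕ)).inter_mem hS hSc)
  obtain ⟨y, hy1, hy2⟩ := Filter.nonempty_of_mem
    ((u : Filter (Finset ℕ)).inter_mem hx1 hx2)
  exact hy2.2.2 hy1.2.2
end

section
/- The partial order FIN^[∞] of infinite block sequences under almost condensation is σ-closed: for every decreasing sequence ⟨Xₙ | n < ω⟩ (i.e., X_{n+1} ≤ Xₙ for all n, where X ≤ Y means X \ F ⊆ FU(Y) for some finite F), there exists an infinite block sequence X with X ≤ Xₙ for every n. -/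
open Set

lemma mn_mem {s : Finset ℕ} (h : s.Nonempty) : mn s ∈ s := by
  have : sInf (↑s : Set ℕ) ∈ (↑s : Set ℕ) := Nat.sInf_mem (by exact_mod_cast h)
  exact_mod_cast this

lemma mn_le {s : Finset ℕ} {a : ℕ} (h : a ∈ s) : mn s ≤ a :=
  Nat.sInf_le (by exact_mod_cast h)

lemma le_mx {s : Finset ℕ} {a : ℕ} (h : a ∈ s) : a ≤ mx s :=
  Finset.le_sup (f := id) h

lemma mn_le_mx {s : Finset ℕ} (h : s.Nonempty) : mn s ≤ mx s :=
  le_mx (mn_mem h)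

lemma mn_mono {x y : Finset ℕ} (h : y ⊆ x) (hy : y.Nonempty) : mn x ≤ mn y :=
  mn_le (h (mn_mem hy))

lemma mem_FU_self {Y : Set (Finset ℕ)} {x : Finset ℕ} (h : x ∈ Y) : x ∈ FU Y :=
  ⟨{x}, Finset.singleton_nonempty x, by simpa, by simp⟩

lemma FU_sup {Y : Set (Finset ℕ)} {F : Finset (Finset ℕ)} (hne : F.Nonempty)
    (h : ∀ s ∈ F, s ∈ FU Y) : F.sup id ∈ FU Y := by
  choose G hG1 hG2 hG3 using h
  refine ⟨F.attach.biUnion (fun s => G s.1 s.2), ?_, ?_, ?_⟩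
  · obtain ⟨a, ha⟩ := hne
    obtain ⟨b, hb⟩ := hG1 a ha
    exact ⟨b, Finset.mem_biUnion.2 ⟨⟨a, ha⟩, Finset.mem_attach _ _, hb⟩⟩
  · intro t ht
    simp only [Finset.coe_biUnion, Set.mem_iUnion] at ht
    obtain ⟨s, -, hs⟩ := ht
    exact hG2 _ _ hs
  · rw [Finset.sup_biUnion]
    have : ∀ s : {x // x ∈ F}, (G s.1 s.2).sup id = id s.1 := fun s => (hG3 s.1 s.2).symm
    rw [Finset.sup_congr rfl (fun s _ => this s), Finset.sup_attach]

theorem stmt16 (Xs : ℕ → Set (Finset ℕ))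
    (hb : ∀ n, IsBlockFam (Xs n)) (hi : ∀ n, (Xs n).Infinite)
    (hdec : ∀ n, ACond (Xs (n + 1)) (Xs n)) :
    ∃ X : Set (Finset ℕ), IsBlockFam X ∧ X.Infinite ∧ ∀ n, ACond X (Xs n) := by
  -- exception sets and bounds
  choose F hFfin hFsub using hdec
  have hB : ∀ n, ∃ N, ∀ s ∈ F n, mn s ≤ N := by
    intro n
    obtain ⟨N, hN⟩ := ((hFfin n).image mn).bddAbove
    exact ⟨N, fun s hs => hN (mem_image_of_mem _ hs)⟩
  choose B hBspec using hB
  have hne : ∀ n, ∀ x ∈ Xs n, x.Nonempty := fun n x hx => (hb n).1 hx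
  -- key: pushing down through the chain
  have key : ∀ k m, m ≤ k → ∀ x ∈ FU (Xs k),
      (∀ j, m ≤ j → j < k → B j < mn x) → x ∈ FU (Xs m) := by
    intro k
    induction k with
    | zero => intro m hm x hx _; simpa [Nat.le_zero.1 hm] using hx
    | succ k ih =>
      intro m hm x hx hgt
      rcases Nat.lt_succ_iff_lt_or_eq.1 (Nat.lt_succ_of_le hm) with hm' | rfl
      · have hm'' : m ≤ k := Nat.lt_succ_iff.1 hm'
        obtain ⟨G, hGne, hGsub, rfl⟩ := hx
        have hstep : ∀ s ∈ G, s ∈ FU (Xs k) := by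
          intro s hs
          have hsX : s ∈ Xs (k + 1) := hGsub hs
          have hsn : s.Nonempty := hne _ _ hsX
          have hsub : s ⊆ G.sup id := Finset.le_sup (f := id) hs
          have h1 : B k < mn s :=
            lt_of_lt_of_le (hgt k hm'' (Nat.lt_succ_self k)) (mn_mono hsub hsn)
          have hsF : s ∉ F k := fun hc => absurd (hBspec k s hc) (not_le.2 h1)
          exact hFsub k ⟨hsX, hsF⟩
        have hx' : G.sup id ∈ FU (Xs k) := FU_sup hGne hstep
        exact ih m hm'' _ hx' (fun j h1 h2 => hgt j h1 (h2.trans (Nat.lt_succ_self k)))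
      · exact hx
  -- picking elements with large min
  have hbig : ∀ k N, ∃ x, x ∈ Xs k ∧ N < mn x := by
    intro k N
    have hinj : Set.InjOn mn (Xs k) := by
      intro x hx y hy hxy
      by_contra hne'
      rcases (hb k).2 x hx y hy hne' with h | h
      · exact absurd hxy (Nat.ne_of_lt (lt_of_le_of_lt (mn_le_mx (hne _ _ hx)) h))
      · exact absurd hxy.symm (Nat.ne_of_lt (lt_of_le_of_lt (mn_le_mx (hne _ _ hy)) h))
    have hSfin : {x ∈ Xs k | mn x ≤ N}.Finite := by
      apply Set.Finite.of_finite_image (f := mn) ?_ (hinj.mono (fun x hx => hx.1))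
      exact (Set.finite_Iic N).subset (by rintro n ⟨x, hx, rfl⟩; exact hx.2)
    obtain ⟨x, hx⟩ := ((hi k).diff hSfin).nonempty
    refine ⟨x, hx.1, ?_⟩
    by_contra h
    exact hx.2 ⟨hx.1, not_lt.1 h⟩
  choose g hg1 hg2 using hbig
  set bnd : ℕ → ℕ := fun k => (Finset.range k).sup B with hbnd_def
  let f : ℕ → Finset ℕ := fun k =>
    Nat.rec (g 0 0) (fun k xk => g (k + 1) (max (mx xk) (bnd (k + 1)))) k
  have hf0 : f 0 = g 0 0 := rfl
  have hfs : ∀ k, f (k + 1) = g (k + 1) (max (mx (f k)) (bnd (k + 1))) := fun k => rfl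
  have hfX : ∀ k, f k ∈ Xs k := by
    intro k; cases k with
    | zero => exact hg1 0 0
    | succ k => rw [hfs]; exact hg1 _ _
  have hfne : ∀ k, (f k).Nonempty := fun k => hne _ _ (hfX k)
  have hmono : ∀ k, mx (f k) < mn (f (k + 1)) := by
    intro k; rw [hfs]
    exact lt_of_le_of_lt (le_max_left _ _) (hg2 _ _)
  have hbndlt : ∀ k j, j < k → B j < mn (f k) := by
    intro k j hj
    cases k with
    | zero => exact absurd hj (Nat.not_lt_zero j)
    | succ k =>
      have h1 : B j ≤ bnd (k + 1) := Finset.le_sup (Finset.mem_range.2 hj)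
      rw [hfs]
      exact lt_of_le_of_lt (h1.trans (le_max_right _ _)) (hg2 _ _)
  have hsep : ∀ j k, j < k → mx (f j) < mn (f k) := by
    intro j k hj
    induction k with
    | zero => exact absurd hj (Nat.not_lt_zero j)
    | succ k ih =>
      rcases Nat.lt_succ_iff_lt_or_eq.1 hj with h | rfl
      · exact lt_of_lt_of_le (ih h)
          ((mn_le_mx (hfne k)).trans (le_of_lt (hmono k)))
      · exact hmono j
  have hinjf : Function.Injective f := by
    intro j k hjk
    by_contra hne'
    rcases Nat.lt_or_ge j k with h | h
    · exact absurd (hjk ▸ hsep j k h) (not_lt.2 (mn_le_mx (hfne k)))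
    · have h' : k < j := lt_of_le_of_ne h (Ne.symm hne')
      exact absurd (hjk ▸ hsep k j h') (not_lt.2 (mn_le_mx (hfne j)))
  refine ⟨Set.range f, ⟨?_, ?_⟩, Set.infinite_range_of_injective hinjf, ?_⟩
  · rintro x ⟨k, rfl⟩; exact hfne k
  · rintro x ⟨j, rfl⟩ y ⟨k, rfl⟩ hxy
    rcases Nat.lt_or_ge j k with h | h
    · exact Or.inl (hsep j k h)
    · exact Or.inr (hsep k j (lt_of_le_of_ne h (fun hc => hxy (by rw [hc]))))
  · intro m
    refine ⟨f '' (Set.Iio m), (Set.finite_Iio m).image f, ?_⟩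
    rintro x ⟨⟨k, rfl⟩, hxF⟩
    have hk : m ≤ k := by
      by_contra h
      exact hxF ⟨k, not_le.1 h, rfl⟩
    exact key k m hk (f k) (mem_FU_self (hfX k)) (fun j _ hj => hbndlt k j hj)
end
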